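/- Let Q be a symmetric n×n real matrix, d ∈ ℝⁿ, A ∈ ℝ^{m×n}, b ∈ ℝᵐ, β ≥ 0, and let x̄ be a KKT point of the QP. If F has nonempty interior, then there exist z̄ ∈ ℝⁿ and a symmetric positive definite matrix U ∈ 𝒮^{n+1} such that (i) [−A, b; 0ᵀ, 1] U [−A, b; 0ᵀ, 1]ᵀ is entrywise nonnegative, (ii) z̄ − x̄ = [I, −x̄] U (Qx̄ + d; −x̄ᵀQx̄ − dᵀx̄ + β), and (iii) z̄ − x̄ is a nonnegative linear combination of finitely many vectors of the form x − x̄ with x ∈ F (hence z̄ − x̄ lies in the tangent cone of F at x̄). In particular the dual SDP used to search for a cut is strictly feasible for this z̄. -/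

import Mathlib

open Matrix

/-- The `(m+1) × (n+1)` block matrix `B₁ = [−A, b; 0ᵀ, 1]`. -/
noncomputable def feasMat {n m : ℕ} (A : Matrix (Fin m) (Fin n) ℝ) (b : Fin m → ℝ) :
    Matrix (Fin m ⊕ Unit) (Fin n ⊕ Unit) ℝ :=
  Matrix.of fun i j =>
    match i, j with
    | Sum.inl i, Sum.inl j => -A i j
    | Sum.inl i, Sum.inr _ => b i
    | Sum.inr _, Sum.inl _ => 0
    | Sum.inr _, Sum.inr _ => 1

/-- The `n × (n+1)` block matrix `[I, −x̄]`. -/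
noncomputable def projMat {n : ℕ} (xbar : Fin n → ℝ) :
    Matrix (Fin n) (Fin n ⊕ Unit) ℝ :=
  Matrix.of fun i j =>
    match j with
    | Sum.inl j => if i = j then 1 else 0
    | Sum.inr _ => -xbar i

/-- The vector `(Qx̄ + d; −x̄ᵀQx̄ − dᵀx̄ + β) ∈ ℝ^{n+1}`. -/
noncomputable def uVec {n : ℕ} (Q : Matrix (Fin n) (Fin n) ℝ) (d xbar : Fin n → ℝ)
    (β : ℝ) : Fin n ⊕ Unit → ℝ :=
  Sum.elim (Q *ᵥ xbar + d) (fun _ => -(xbar ⬝ᵥ (Q *ᵥ xbar)) - d ⬝ᵥ xbar + β)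

/-! Pick an interior point `x₀` of `F` and `c > 0` such that the `n + 1` affinely independent points
`x₀, x₀ + c e₁, …, x₀ + c eₙ` are feasible. Their homogenizations `yₖ = (xₖ; 1)` span `ℝⁿ⁺¹`, so
the Gram matrix `U = Σ yₖ yₖᵀ` is positive definite. Since `B₁ yₖ = (b − A xₖ; 1) ≥ 0`, the matrix
`B₁ U B₁ᵀ = Σ (B₁ yₖ)(B₁ yₖ)ᵀ` is entrywise nonnegative, and `[I, −x̄] U u = Σ (yₖ ⬝ u)(xₖ − x̄)`
with coefficients `yₖ ⬝ u = (xₖ − x̄)ᵀ(Qx̄ + d) + β ≥ 0` by the KKT conditions. -/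

theorem exists_pos_forall_add_smul_mem_of_mem_interior {ι E : Type*} [Finite ι]
    [AddCommGroup E] [Module ℝ E] [TopologicalSpace E] [ContinuousAdd E] [ContinuousSMul ℝ E]
    {s : Set E} {x : E} (hx : x ∈ interior s) (v : ι → E) :
    ∃ c : ℝ, 0 < c ∧ ∀ k, x + c • v k ∈ s := by
  have hnear : ∀ k, ∀ᶠ t in nhds (0 : ℝ), x + t • v k ∈ s := fun k => by
    have hcont : Continuous fun t : ℝ => x + t • v k := by fun_prop
    have htends := hcont.tendsto 0
    simp only [zero_smul, add_zero] at htends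
    exact htends (mem_interior_iff_mem_nhds.1 hx)
  obtain ⟨c, hc, hcpos⟩ :=
    ((Filter.eventually_all.2 hnear).filter_mono nhdsWithin_le_nhds).and
      (self_mem_nhdsWithin (s := Set.Ioi 0)) |>.exists
  exact ⟨c, hcpos, hc⟩

theorem transpose_mul_self_nonneg {ι κ R : Type*} [Fintype ι] [Semiring R] [PartialOrder R]
    [IsOrderedRing R] {M : Matrix ι κ R} (hM : ∀ k i, 0 ≤ M k i) (i j : κ) :
    0 ≤ (Mᵀ * M) i j := by
  rw [mul_apply]
  exact Finset.sum_nonneg fun k _ => mul_nonneg (hM k i) (hM k j)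

theorem mulVec_transpose_mulVec_eq_sum {ι κ μ R : Type*} [Fintype ι] [Fintype κ] [CommSemiring R]
    (M : Matrix μ κ R) (Y : Matrix ι κ R) (w : ι → R) :
    M *ᵥ (Yᵀ *ᵥ w) = ∑ k, w k • M *ᵥ Y k := by
  simp only [mulVec_transpose, vecMul_eq_sum, mulVec_sum, mulVec_smul]

theorem sub_dotProduct_nonneg_of_kkt {ι κ : Type*} [Fintype ι] [Fintype κ]
    {A : Matrix ι κ ℝ} {b lam : ι → ℝ} {g xbar : κ → ℝ} (hlam : 0 ≤ lam)
    (hstat : g = -(Aᵀ *ᵥ lam)) (hcompl : (A *ᵥ xbar - b) ⬝ᵥ lam = 0)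
    {x : κ → ℝ} (hx : A *ᵥ x ≤ b) :
    0 ≤ (x - xbar) ⬝ᵥ g := by
  have hslack : (x - xbar) ⬝ᵥ g = lam ⬝ᵥ (b - A *ᵥ x) := by
    rw [sub_dotProduct, dotProduct_comm (A *ᵥ xbar), dotProduct_comm b] at hcompl
    rw [hstat, dotProduct_neg, dotProduct_mulVec, vecMul_transpose, dotProduct_comm _ lam,
      mulVec_sub, dotProduct_sub, dotProduct_sub]
    linarith
  rw [hslack]
  exact dotProduct_nonneg_of_nonneg hlam (sub_nonneg.2 hx)

def homogRows {ι κ R : Type*} [One R] (xs : ι → κ → R) : Matrix ι (κ ⊕ Unit) R :=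
  Matrix.of fun k => Sum.elim (xs k) 1

theorem homogRows_mulVec_apply {ι κ R : Type*} [Fintype κ] [NonAssocSemiring R]
    (xs : ι → κ → R) (v : κ ⊕ Unit → R) (k : ι) :
    (homogRows xs *ᵥ v) k = xs k ⬝ᵥ (v ∘ Sum.inl) + v (Sum.inr ()) := by
  simp [homogRows, mulVec, dotProduct, Fintype.sum_sum_type]

theorem homogRows_cons_mulVec_injective {n : ℕ} {R : Type*} [Field R] (x₀ : Fin n → R) {c : R}
    (hc : c ≠ 0) :
    Function.Injective (homogRows
      (Fin.cons x₀ fun k => x₀ + c • Pi.single k 1 : Fin (n + 1) → Fin n → R)).mulVec := by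
  refine (injective_iff_map_eq_zero (mulVecLin _)).2 fun v hv => ?_
  have hrow := congrFun hv
  simp only [mulVecLin_apply, Pi.zero_apply, homogRows_mulVec_apply] at hrow
  have hbase := hrow 0
  have hcoord : ∀ k, v (Sum.inl k) = 0 := fun k => by
    have hk := hrow k.succ
    simp only [Fin.cons_succ, Fin.cons_zero, add_dotProduct, smul_dotProduct,
      single_one_dotProduct, Function.comp_apply, smul_eq_mul] at hk hbase
    have hdiff : c * v (Sum.inl k) = 0 := by linear_combination hk - hbase
    simpa [hc] using hdiff
  have hlast : v (Sum.inr ()) = 0 := by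
    have hzero : v ∘ Sum.inl = 0 := funext hcoord
    simpa [hzero] using hbase
  ext (k | ⟨⟩)
  exacts [hcoord k, hlast]

section Blocks

variable {n m : ℕ}

theorem feasMat_mulVec_sum_elim (A : Matrix (Fin m) (Fin n) ℝ) (b : Fin m → ℝ)
    (x : Fin n → ℝ) : feasMat A b *ᵥ Sum.elim x 1 = Sum.elim (b - A *ᵥ x) 1 := by
  ext (i | ⟨⟩)
  · simp [feasMat, mulVec, dotProduct, Fintype.sum_sum_type, sub_eq_neg_add]
  · simp [feasMat, mulVec, dotProduct, Fintype.sum_sum_type]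

theorem feasMat_mulVec_sum_elim_nonneg {A : Matrix (Fin m) (Fin n) ℝ} {b : Fin m → ℝ}
    {x : Fin n → ℝ} (hx : A *ᵥ x ≤ b) : 0 ≤ feasMat A b *ᵥ Sum.elim x 1 := by
  rw [feasMat_mulVec_sum_elim]
  rintro (i | ⟨⟩)
  exacts [sub_nonneg.2 (hx i), zero_le_one]

theorem projMat_mulVec_sum_elim (xbar x : Fin n → ℝ) :
    projMat xbar *ᵥ Sum.elim x 1 = x - xbar := by
  ext i
  simp [projMat, mulVec, dotProduct, Fintype.sum_sum_type, sub_eq_add_neg]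

theorem sum_elim_dotProduct_uVec (Q : Matrix (Fin n) (Fin n) ℝ) (d xbar x : Fin n → ℝ) (β : ℝ) :
    Sum.elim x 1 ⬝ᵥ uVec Q d xbar β = (x - xbar) ⬝ᵥ (Q *ᵥ xbar + d) + β := by
  simp only [uVec, dotProduct, Fintype.sum_sum_type, Sum.elim_inl, Sum.elim_inr, Pi.one_apply,
    Pi.sub_apply, Pi.add_apply, sub_mul, mul_add, Finset.sum_add_distrib, Finset.sum_sub_distrib,
    Finset.univ_unique, Finset.sum_singleton, one_mul]
  simp only [mul_comm (d _)]
  ring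

end Blocks

theorem dual_SDP_strictly_feasible {n m : ℕ} (Q : Matrix (Fin n) (Fin n) ℝ)
    (d : Fin n → ℝ) (A : Matrix (Fin m) (Fin n) ℝ) (b : Fin m → ℝ)
    (β : ℝ) (hβ : 0 ≤ β)
    (xbar : Fin n → ℝ)
    (lam : Fin m → ℝ) (hlam : 0 ≤ lam)
    (hstat : Q *ᵥ xbar + d = -(Aᵀ *ᵥ lam))
    (hcs : (A *ᵥ xbar - b) ⬝ᵥ lam = 0)
    (hint : (interior {x : Fin n → ℝ | A *ᵥ x ≤ b}).Nonempty) :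
    ∃ zbar : Fin n → ℝ, ∃ U : Matrix (Fin n ⊕ Unit) (Fin n ⊕ Unit) ℝ,
      U.PosDef ∧
      (∀ i j, 0 ≤ (feasMat A b * U * (feasMat A b)ᵀ) i j) ∧
      zbar - xbar = projMat xbar *ᵥ (U *ᵥ uVec Q d xbar β) ∧
      ∃ (N : ℕ) (xs : Fin N → Fin n → ℝ) (α : Fin N → ℝ),
        (∀ i, A *ᵥ xs i ≤ b) ∧ (∀ i, 0 ≤ α i) ∧
        zbar - xbar = ∑ i, α i • (xs i - xbar) := by
  obtain ⟨x₀, hx₀⟩ := hint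
  obtain ⟨c, hc, hstep⟩ :=
    exists_pos_forall_add_smul_mem_of_mem_interior hx₀ fun k : Fin n => Pi.single k (1 : ℝ)
  set xs : Fin (n + 1) → Fin n → ℝ := Fin.cons x₀ fun k => x₀ + c • Pi.single k 1
  have hxs : ∀ k, A *ᵥ xs k ≤ b := Fin.cases (interior_subset hx₀) hstep
  set Y := homogRows xs
  set α := Y *ᵥ uVec Q d xbar β
  refine ⟨xbar + ∑ k, α k • (xs k - xbar), Yᵀ * Y, ?_, ?_, ?_,
    n + 1, xs, α, hxs, fun k => ?_, add_sub_cancel_left _ _⟩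
  · simpa [conjTranspose_eq_transpose_of_trivial] using
      PosDef.conjTranspose_mul_self Y (homogRows_cons_mulVec_injective x₀ hc.ne')
  · have hrows : ∀ k i, 0 ≤ (Y * (feasMat A b)ᵀ) k i := fun k i => by
      rw [mul_apply_eq_vecMul, vecMul_transpose]
      exact feasMat_mulVec_sum_elim_nonneg (hxs k) i
    simpa [Matrix.mul_assoc, transpose_mul] using transpose_mul_self_nonneg hrows
  · rw [add_sub_cancel_left, ← mulVec_mulVec, mulVec_transpose_mulVec_eq_sum]
    exact Finset.sum_congr rfl fun k _ =>
      congrArg (α k • ·) (projMat_mulVec_sum_elim xbar (xs k)).symm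
  · rw [show α k = Sum.elim (xs k) 1 ⬝ᵥ uVec Q d xbar β from rfl, sum_elim_dotProduct_uVec]
    exact add_nonneg (sub_dotProduct_nonneg_of_kkt hlam hstat hcs (hxs k)) hβ
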